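/- arXiv:2206.01027 — 2 statements merged into one kernel-verified Lean document; each statement's English description precedes it below -/
import Mathlib

section
/- If α is a simple multisegment, then n_{α~} = L_α: the number of segments of the Zelevinsky involution of α equals the maximal length of a segment of α. -/
/-- A finite multiset of integer pairs `(b, e)` is a multisegment if each pair
satisfies `b ≤ e`; the pair `(b, e)` encodes the segment `{b, b+1, …, e}`. -/
def IsMultisegment (α : Multiset (ℤ × ℤ)) : Prop := ∀ p ∈ α, p.1 ≤ p.2

/-- The length `e - b + 1` of the segment `(b, e)`. -/
def segLen (p : ℤ × ℤ) : ℕ := (p.2 - p.1 + 1).toNat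

/-- `L_α`: the maximal length of a segment of `α`. -/
def maxLen (α : Multiset (ℤ × ℤ)) : ℕ := (α.map segLen).sup

/-- The union of the segments `p` and `q` is a segment strictly containing both. -/
def Linked (p q : ℤ × ℤ) : Prop :=
  q.1 ≤ p.2 + 1 ∧ p.1 ≤ q.2 + 1 ∧
    (min p.1 q.1, max p.2 q.2) ≠ p ∧ (min p.1 q.1, max p.2 q.2) ≠ q

/-- The intersection of two segments, as a multiset (empty if the segments are disjoint). -/
def interMS (p q : ℤ × ℤ) : Multiset (ℤ × ℤ) :=
  if max p.1 q.1 ≤ min p.2 q.2 then {(max p.1 q.1, min p.2 q.2)} else 0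

/-- An elementary operation replaces two segments whose union is a segment strictly
containing both by their union and (if nonempty) their intersection. -/
def ElemStep (α β : Multiset (ℤ × ℤ)) : Prop :=
  ∃ p q rest, α = p ::ₘ q ::ₘ rest ∧ Linked p q ∧
    β = (min p.1 q.1, max p.2 q.2) ::ₘ (interMS p q + rest)

/-- The partial order on multisegments: `α ≤ β` iff `β` is obtained from `α` by
a finite (possibly empty) sequence of elementary operations. -/
def msLE (α β : Multiset (ℤ × ℤ)) : Prop := Relation.ReflTransGen ElemStep α β

/-- Mœglin–Waldspurger: the chain `Δ_e, Δ_{e-1}, …, Δ_m` starting from `Δ`,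
where at each step we pass to a segment of `α` with end value one less, preceding
the current segment, and with maximal base value (fuel-driven recursion). -/
def mwChainAux : ℕ → Multiset (ℤ × ℤ) → ℤ × ℤ → List (ℤ × ℤ)
  | 0, _, Δ => [Δ]
  | n + 1, α, Δ =>
    let s := ((α.filter (fun p => p.2 = Δ.2 - 1 ∧ p.1 < Δ.1)).map Prod.fst).toFinset
    if h : s.Nonempty then Δ :: mwChainAux n α (s.max' h, Δ.2 - 1) else [Δ]

/-- The Mœglin–Waldspurger chain `Δ_e, Δ_{e-1}, …, Δ_m` of `α`: here `e` is the largest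
end value of a segment of `α` and `Δ_e` has maximal base value among segments with
end value `e`. -/
def mwChain (α : Multiset (ℤ × ℤ)) : List (ℤ × ℤ) :=
  let ends := (α.map Prod.snd).toFinset
  if h : ends.Nonempty then
    let e := ends.max' h
    let bases := ((α.filter (fun p => p.2 = e)).map Prod.fst).toFinset
    if hb : bases.Nonempty then mwChainAux α.card α (bases.max' hb, e) else []
  else []

/-- `M(α) = [m, e]`. -/
def mwSegment (α : Multiset (ℤ × ℤ)) : ℤ × ℤ :=
  (((mwChain α).getLastD (0, 0)).2, ((mwChain α).headD (0, 0)).2)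

/-- Delete the end value from a segment, discarding the segment if it becomes empty. -/
def mwShrink (p : ℤ × ℤ) : Multiset (ℤ × ℤ) :=
  if p.1 ≤ p.2 - 1 then {(p.1, p.2 - 1)} else 0

/-- `α ∖ M(α)`: delete the integer `i` from the segment `Δ_i` for each `m ≤ i ≤ e`. -/
def mwResidual (α : Multiset (ℤ × ℤ)) : Multiset (ℤ × ℤ) :=
  (α - ↑(mwChain α)) + (↑(mwChain α) : Multiset (ℤ × ℤ)).bind mwShrink

/-- The total number of integers occurring in the segments of `α` (with multiplicity). -/
def msSize (α : Multiset (ℤ × ℤ)) : ℕ := (α.map segLen).sum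

def tildeAux : ℕ → Multiset (ℤ × ℤ) → Multiset (ℤ × ℤ)
  | 0, _ => 0
  | n + 1, α => if α = 0 then 0 else mwSegment α ::ₘ tildeAux n (mwResidual α)

/-- The Zelevinsky involution `α ↦ α~`, computed by the Mœglin–Waldspurger algorithm:
`∅~ = ∅` and `α~ = {M(α)} ⊎ (α ∖ M(α))~`. -/
def tilde (α : Multiset (ℤ × ℤ)) : Multiset (ℤ × ℤ) := tildeAux (msSize α) α

/-- The simple multisegment `{[b, e], [b+1, e+1], …, [b+n-1, e+n-1]}`. -/
def simpleMS (b e : ℤ) (n : ℕ) : Multiset (ℤ × ℤ) :=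
  (Multiset.range n).map fun k => (b + (k : ℤ), e + (k : ℤ))

/-- A multisegment is simple if it has the form `{[b,e], [b+1,e+1], …, [b+n-1, e+n-1]}`
with `b ≤ e` and `n ≥ 1`. -/
def IsSimple (α : Multiset (ℤ × ℤ)) : Prop :=
  ∃ (b e : ℤ) (n : ℕ), b ≤ e ∧ 1 ≤ n ∧ α = simpleMS b e n

/-- The union `⋃_{Δ ∈ α} Δ` of the segments of `α`, as a set of integers. -/
def unionSet (α : Multiset (ℤ × ℤ)) : Set ℤ := {x | ∃ p ∈ α, p.1 ≤ x ∧ x ≤ p.2}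

/-- `c_α`: the minimal number of segments whose union is `⋃_{Δ ∈ α} Δ`. -/
noncomputable def cNum (α : Multiset (ℤ × ℤ)) : ℕ :=
  sInf {n | ∃ β : Multiset (ℤ × ℤ), IsMultisegment β ∧ β.card = n ∧ unionSet β = unionSet α}

/-! For a simple multisegment the Mœglin–Waldspurger chain starting at the top segment
`[b+n-1, e+n-1]` steps down through every segment of `α`, so `α ∖ M(α)` is `α` with every
segment shortened by its end value, which is again simple. Each step of the algorithm thus
shortens all segments by one, so it runs exactly `L_α` times. -/

section MoeglinWaldspurger

variable {α : Multiset (ℤ × ℤ)} {Δ : ℤ × ℤ}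

lemma mwChainAux_eq_singleton (h : ∀ p ∈ α, p.2 = Δ.2 - 1 → Δ.1 ≤ p.1) :
    ∀ m, mwChainAux m α Δ = [Δ]
  | 0 => rfl
  | m + 1 => by
    rw [mwChainAux]
    split_ifs with hs
    · obtain ⟨x, hx⟩ := hs
      simp only [Multiset.mem_toFinset, Multiset.mem_map, Multiset.mem_filter] at hx
      obtain ⟨p, ⟨hp, hend, hbase⟩, -⟩ := hx
      exact absurd hbase (h p hp hend).not_gt
    · rfl

lemma mwChainAux_succ_eq_cons {q : ℤ × ℤ} (hq : q ∈ α) (hqe : q.2 = Δ.2 - 1) (hqb : q.1 < Δ.1)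
    (hmax : ∀ p ∈ α, p.2 = Δ.2 - 1 → p.1 < Δ.1 → p.1 ≤ q.1) (m : ℕ) :
    mwChainAux (m + 1) α Δ = Δ :: mwChainAux m α q := by
  have hmem : q.1 ∈ ((α.filter (fun p => p.2 = Δ.2 - 1 ∧ p.1 < Δ.1)).map Prod.fst).toFinset := by
    simp only [Multiset.mem_toFinset, Multiset.mem_map, Multiset.mem_filter]
    exact ⟨q, ⟨hq, hqe, hqb⟩, rfl⟩
  rw [mwChainAux, dif_pos ⟨q.1, hmem⟩]
  congr 2
  refine Prod.ext ?_ ?_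
  · refine le_antisymm (Finset.max'_le _ ⟨_, hmem⟩ _ fun x hx => ?_) (Finset.le_max' _ _ hmem)
    simp only [Multiset.mem_toFinset, Multiset.mem_map, Multiset.mem_filter] at hx
    obtain ⟨p, ⟨hp, hpe, hpb⟩, rfl⟩ := hx
    exact hmax p hp hpe hpb
  · exact hqe.symm

lemma mwChain_eq_mwChainAux (hΔ : Δ ∈ α) (hend : ∀ p ∈ α, p.2 ≤ Δ.2)
    (hbase : ∀ p ∈ α, p.2 = Δ.2 → p.1 ≤ Δ.1) :
    mwChain α = mwChainAux (Multiset.card α) α Δ := by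
  have hΔe : Δ.2 ∈ (α.map Prod.snd).toFinset :=
    Multiset.mem_toFinset.2 (Multiset.mem_map_of_mem _ hΔ)
  have he : (α.map Prod.snd).toFinset.max' ⟨_, hΔe⟩ = Δ.2 := by
    refine le_antisymm (Finset.max'_le _ _ _ fun x hx => ?_) (Finset.le_max' _ _ hΔe)
    simp only [Multiset.mem_toFinset, Multiset.mem_map] at hx
    obtain ⟨p, hp, rfl⟩ := hx
    exact hend p hp
  have hΔb : Δ.1 ∈ ((α.filter (fun p => p.2 = Δ.2)).map Prod.fst).toFinset := by
    simp only [Multiset.mem_toFinset, Multiset.mem_map, Multiset.mem_filter]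
    exact ⟨Δ, ⟨hΔ, rfl⟩, rfl⟩
  have hb : ((α.filter (fun p => p.2 = Δ.2)).map Prod.fst).toFinset.max' ⟨_, hΔb⟩ = Δ.1 := by
    refine le_antisymm (Finset.max'_le _ _ _ fun x hx => ?_) (Finset.le_max' _ _ hΔb)
    simp only [Multiset.mem_toFinset, Multiset.mem_map, Multiset.mem_filter] at hx
    obtain ⟨p, ⟨hp, hpe⟩, rfl⟩ := hx
    exact hbase p hp hpe
  rw [mwChain, dif_pos ⟨_, hΔe⟩]
  simp only [he]
  rw [dif_pos ⟨_, hΔb⟩, hb]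

end MoeglinWaldspurger

lemma tildeAux_zero_right : ∀ f, tildeAux f 0 = 0
  | 0 => rfl
  | _ + 1 => if_pos rfl

lemma tildeAux_succ_of_ne_zero {α : Multiset (ℤ × ℤ)} (hα : α ≠ 0) (f : ℕ) :
    tildeAux (f + 1) α = mwSegment α ::ₘ tildeAux f (mwResidual α) :=
  if_neg hα

section Simple

variable {b e : ℤ} {n : ℕ}

-- `simpleMS` elaborates with `k : ℤ`, mapping over the coercion of `Multiset.range n` to `ℤ`.
lemma simpleMS_eq_map_range :
    simpleMS b e n = (Multiset.range n).map fun k : ℕ => (b + k, e + k) := by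
  simp [simpleMS, Multiset.map_map]

lemma mem_simpleMS {p : ℤ × ℤ} : p ∈ simpleMS b e n ↔ ∃ j < n, (b + j, e + j) = p := by
  simp [simpleMS_eq_map_range]

lemma mwChainAux_simpleMS {k m : ℕ} (hk : k < n) (hkm : k ≤ m) :
    mwChainAux m (simpleMS b e n) (b + k, e + k) =
      (List.range (k + 1)).reverse.map fun j : ℕ => (b + j, e + j) := by
  induction k generalizing m with
  | zero =>
    rw [mwChainAux_eq_singleton]
    · simp
    · rintro _ hp hpe
      obtain ⟨j, -, rfl⟩ := mem_simpleMS.1 hp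
      simp only [CharP.cast_eq_zero, add_zero] at hpe ⊢
      omega
  | succ k ih =>
    obtain ⟨m, rfl⟩ : ∃ m', m = m' + 1 := ⟨m - 1, by omega⟩
    rw [mwChainAux_succ_eq_cons (q := (b + k, e + k)), ih (by omega) (by omega),
      List.range_succ (n := k + 1)]
    · simp
    · exact mem_simpleMS.2 ⟨k, by omega, rfl⟩
    · push_cast; ring
    · push_cast; omega
    · rintro _ hp hpe -
      obtain ⟨j, -, rfl⟩ := mem_simpleMS.1 hp
      push_cast at hpe ⊢
      omega

lemma card_simpleMS : Multiset.card (simpleMS b e n) = n := by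
  simp [simpleMS_eq_map_range]

lemma coe_mwChain_simpleMS (hn : 0 < n) :
    (mwChain (simpleMS b e n) : Multiset (ℤ × ℤ)) = simpleMS b e n := by
  obtain ⟨k, rfl⟩ : ∃ k, n = k + 1 := ⟨n - 1, by omega⟩
  rw [mwChain_eq_mwChainAux (Δ := (b + k, e + k)), card_simpleMS,
    mwChainAux_simpleMS (by omega) k.le_succ]
  · rw [List.map_reverse, Multiset.coe_reverse, ← Multiset.map_coe, Multiset.coe_range,
      simpleMS_eq_map_range]
  · exact mem_simpleMS.2 ⟨k, by omega, rfl⟩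
  all_goals
    rintro _ hp
    obtain ⟨j, hj, rfl⟩ := mem_simpleMS.1 hp
    dsimp only
    omega

lemma mwResidual_simpleMS (hn : 0 < n) :
    mwResidual (simpleMS b e n) = (simpleMS b e n).bind mwShrink := by
  rw [mwResidual, coe_mwChain_simpleMS hn, tsub_self, zero_add]

lemma bind_mwShrink_simpleMS_of_lt (h : b < e) :
    (simpleMS b e n).bind mwShrink = simpleMS b (e - 1) n := by
  have hshrink (k : ℕ) : mwShrink (b + k, e + k) = {(b + k, e - 1 + k)} := by
    rw [mwShrink, if_pos (by dsimp only; omega)]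
    congr 2
    ring
  rw [simpleMS_eq_map_range, simpleMS_eq_map_range, Multiset.bind_map]
  simp only [hshrink, Multiset.bind_singleton]

lemma bind_mwShrink_simpleMS_self : (simpleMS b b n).bind mwShrink = 0 := by
  have hshrink (k : ℕ) : mwShrink (b + k, b + k) = 0 := by
    rw [mwShrink, if_neg (by dsimp only; omega)]
  rw [simpleMS_eq_map_range, Multiset.bind_map]
  simp only [hshrink, Multiset.bind_zero]

lemma map_segLen_simpleMS :
    (simpleMS b e n).map segLen = Multiset.replicate n (e - b + 1).toNat := by
  rw [simpleMS_eq_map_range, Multiset.map_map, Multiset.eq_replicate]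
  refine ⟨Multiset.card_map _ _ |>.trans (Multiset.card_range n), fun x hx => ?_⟩
  obtain ⟨k, -, rfl⟩ := Multiset.mem_map.1 hx
  simp only [Function.comp_apply, segLen]
  omega

lemma maxLen_simpleMS (hn : 0 < n) : maxLen (simpleMS b e n) = (e - b + 1).toNat := by
  rw [maxLen, map_segLen_simpleMS]
  refine le_antisymm (Multiset.sup_le.2 fun x hx => ?_) (Multiset.le_sup ?_)
  · exact (Multiset.eq_of_mem_replicate hx).le
  · exact Multiset.mem_replicate.2 ⟨hn.ne', rfl⟩

lemma msSize_simpleMS : msSize (simpleMS b e n) = n * (e - b + 1).toNat := by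
  rw [msSize, map_segLen_simpleMS, Multiset.sum_replicate, smul_eq_mul]

lemma simpleMS_ne_zero (hn : 0 < n) : simpleMS b e n ≠ 0 :=
  Multiset.card_pos.1 (card_simpleMS.symm ▸ hn)

lemma card_tildeAux_simpleMS (hn : 0 < n) :
    ∀ {ℓ f : ℕ}, ℓ < f → Multiset.card (tildeAux f (simpleMS b (b + ℓ) n)) = ℓ + 1
  | 0, f + 1, _ => by
    rw [tildeAux_succ_of_ne_zero (simpleMS_ne_zero hn), mwResidual_simpleMS hn, Nat.cast_zero,
      add_zero, bind_mwShrink_simpleMS_self, tildeAux_zero_right, Multiset.card_cons,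
      Multiset.card_zero]
  | ℓ + 1, f + 1, hf => by
    have hend : b + ((ℓ + 1 : ℕ) : ℤ) - 1 = b + ℓ := by push_cast; ring
    rw [tildeAux_succ_of_ne_zero (simpleMS_ne_zero hn), mwResidual_simpleMS hn,
      bind_mwShrink_simpleMS_of_lt (by omega), hend, Multiset.card_cons,
      card_tildeAux_simpleMS hn (by omega)]

end Simple

/-- If `α` is simple then `n_{α~} = L_α`. -/
theorem card_tilde_eq_maxLen (α : Multiset (ℤ × ℤ)) (hα : IsSimple α) :
    Multiset.card (tilde α) = maxLen α := by
  obtain ⟨b, e, n, hbe, hn, rfl⟩ := hα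
  obtain ⟨ℓ, rfl⟩ : ∃ ℓ : ℕ, e = b + ℓ := ⟨(e - b).toNat, by omega⟩
  have hlen : (b + ℓ - b + 1).toNat = ℓ + 1 := by omega
  have hfuel : ℓ < msSize (simpleMS b (b + ℓ) n) := by
    rw [msSize_simpleMS, hlen]
    nlinarith
  rw [tilde, maxLen_simpleMS hn, hlen, card_tildeAux_simpleMS hn hfuel]
end

section
/- Let α and β be multisegments such that L_{α~} = n_α, α ≤ β, and α~ ≤ β~. Then n_α = n_β = L_{α~} = L_{β~}. -/
/-!
Elementary operations never increase the number of segments and never decrease the maximal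
length of a segment. In the Mœglin–Waldspurger algorithm the chain `Δ_e, …, Δ_m` consists of
distinct segments of `γ`, one for each integer of `M(γ)`, and `γ ∖ M(γ)` has no more segments
than `γ`; by induction `L_{γ~} ≤ n_γ` for every `γ`. Hence `n_α = L_{α~} ≤ L_{β~} ≤ n_β ≤ n_α`.
-/

lemma card_interMS_le (p q : ℤ × ℤ) : Multiset.card (interMS p q) ≤ 1 := by
  unfold interMS; split <;> simp

lemma ElemStep.card_le {α β : Multiset (ℤ × ℤ)} (h : ElemStep α β) :
    Multiset.card β ≤ Multiset.card α := by
  obtain ⟨p, q, rest, rfl, -, rfl⟩ := h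
  have := card_interMS_le p q
  simp only [Multiset.card_cons, Multiset.card_add]
  omega

lemma msLE.card_le {α β : Multiset (ℤ × ℤ)} (h : msLE α β) :
    Multiset.card β ≤ Multiset.card α := by
  induction h with
  | refl => exact le_rfl
  | tail _ hstep ih => exact hstep.card_le.trans ih

lemma segLen_le_segLen {p q : ℤ × ℤ} (hb : q.1 ≤ p.1) (he : p.2 ≤ q.2) :
    segLen p ≤ segLen q :=
  Int.toNat_le_toNat (by omega)

lemma maxLen_cons (p : ℤ × ℤ) (α : Multiset (ℤ × ℤ)) :
    maxLen (p ::ₘ α) = segLen p ⊔ maxLen α := by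
  simp [maxLen]

lemma maxLen_add (α β : Multiset (ℤ × ℤ)) : maxLen (α + β) = maxLen α ⊔ maxLen β := by
  simp [maxLen]

lemma ElemStep.maxLen_le {α β : Multiset (ℤ × ℤ)} (h : ElemStep α β) :
    maxLen α ≤ maxLen β := by
  obtain ⟨p, q, rest, rfl, -, rfl⟩ := h
  have hp : segLen p ≤ segLen (min p.1 q.1, max p.2 q.2) :=
    segLen_le_segLen (min_le_left _ _) (le_max_left _ _)
  have hq : segLen q ≤ segLen (min p.1 q.1, max p.2 q.2) :=
    segLen_le_segLen (min_le_right _ _) (le_max_right _ _)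
  simp only [maxLen_cons, maxLen_add]
  exact sup_le (le_sup_of_le_left hp)
    (sup_le (le_sup_of_le_left hq) (le_sup_of_le_right le_sup_right))

lemma msLE.maxLen_le {α β : Multiset (ℤ × ℤ)} (h : msLE α β) :
    maxLen α ≤ maxLen β := by
  induction h with
  | refl => exact le_rfl
  | tail _ hstep ih => exact ih.trans hstep.maxLen_le

lemma max'_fst_filter_mem {ι κ : Type*} [LinearOrder ι] {α : Multiset (ι × κ)}
    {P : ι × κ → Prop} [DecidablePred P] {e : κ} (hP : ∀ p, P p → p.2 = e) (h : ((α.filter P).map Prod.fst).toFinset.Nonempty) :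
    (((α.filter P).map Prod.fst).toFinset.max' h, e) ∈ α := by
  obtain ⟨p, hp, hfst⟩ := Multiset.mem_map.mp (Multiset.mem_toFinset.mp (Finset.max'_mem _ h))
  obtain ⟨hpα, hPp⟩ := Multiset.mem_filter.mp hp
  convert hpα using 1
  exact Prod.ext hfst.symm (hP p hPp).symm

lemma mwChainAux_headD (n : ℕ) (α : Multiset (ℤ × ℤ)) (Δ d : ℤ × ℤ) :
    (mwChainAux n α Δ).headD d = Δ := by
  cases n with
  | zero => rfl
  | succ n => dsimp only [mwChainAux]; split <;> rfl

lemma mwChainAux_getLastD_snd_add_length (n : ℕ) (α : Multiset (ℤ × ℤ))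
    (Δ d : ℤ × ℤ) :
    ((mwChainAux n α Δ).getLastD d).2 + (mwChainAux n α Δ).length = Δ.2 + 1 := by
  induction n generalizing Δ d with
  | zero => simp [mwChainAux]
  | succ n ih =>
    dsimp only [mwChainAux]
    split
    · rw [List.getLastD_cons, List.length_cons, Nat.cast_succ, ← add_assoc, ih]
      ring
    · simp

lemma mwChainAux_snd_le (n : ℕ) (α : Multiset (ℤ × ℤ)) (Δ : ℤ × ℤ) :
    ∀ x ∈ mwChainAux n α Δ, x.2 ≤ Δ.2 := by
  induction n generalizing Δ with
  | zero => simp [mwChainAux]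
  | succ n ih =>
    dsimp only [mwChainAux]
    split
    · rintro x (_ | ⟨_, hx⟩)
      · exact le_rfl
      · have := ih _ x hx
        dsimp only at this
        omega
    · simp

lemma mwChainAux_nodup (n : ℕ) (α : Multiset (ℤ × ℤ)) (Δ : ℤ × ℤ) :
    (mwChainAux n α Δ).Nodup := by
  induction n generalizing Δ with
  | zero => simp [mwChainAux]
  | succ n ih =>
    dsimp only [mwChainAux]
    split
    · refine List.nodup_cons.mpr ⟨fun hΔ => ?_, ih _⟩
      have := mwChainAux_snd_le n α _ Δ hΔ
      dsimp only at this
      omega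
    · simp

lemma mwChainAux_subset (n : ℕ) {α : Multiset (ℤ × ℤ)} {Δ : ℤ × ℤ} (hΔ : Δ ∈ α) :
    ∀ x ∈ mwChainAux n α Δ, x ∈ α := by
  induction n generalizing Δ with
  | zero => simpa [mwChainAux] using hΔ
  | succ n ih =>
    dsimp only [mwChainAux]
    split
    · rename_i hs
      rintro x (_ | ⟨_, hx⟩)
      · exact hΔ
      · exact ih (max'_fst_filter_mem (fun p hp => hp.1) hs) x hx
    · simpa using hΔ

lemma exists_mem_mwChain_eq_mwChainAux {α : Multiset (ℤ × ℤ)} (hα : α ≠ 0) :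
    ∃ Δ ∈ α, mwChain α = mwChainAux (Multiset.card α) α Δ := by
  have hends : (α.map Prod.snd).toFinset.Nonempty := by simpa using hα
  set e := (α.map Prod.snd).toFinset.max' hends
  have hbases : ((α.filter (fun p => p.2 = e)).map Prod.fst).toFinset.Nonempty := by
    obtain ⟨p, hp, hpe⟩ :=
      Multiset.mem_map.mp (Multiset.mem_toFinset.mp (Finset.max'_mem _ hends))
    exact ⟨p.1, Multiset.mem_toFinset.mpr
      (Multiset.mem_map_of_mem _ (Multiset.mem_filter.mpr ⟨hp, hpe⟩))⟩
  refine ⟨_, max'_fst_filter_mem (fun _ hp => hp) hbases, ?_⟩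
  simp only [mwChain, dif_pos hends]
  exact dif_pos hbases

lemma mwChain_le (α : Multiset (ℤ × ℤ)) : (mwChain α : Multiset (ℤ × ℤ)) ≤ α := by
  rcases eq_or_ne α 0 with rfl | hα
  · simp [mwChain]
  obtain ⟨Δ, hΔ, hchain⟩ := exists_mem_mwChain_eq_mwChainAux hα
  rw [hchain, Multiset.le_iff_subset (Multiset.coe_nodup.mpr (mwChainAux_nodup _ α Δ))]
  exact fun x hx => mwChainAux_subset _ hΔ x (Multiset.mem_coe.mp hx)

lemma segLen_mwSegment {α : Multiset (ℤ × ℤ)} (hα : α ≠ 0) :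
    segLen (mwSegment α) = (mwChain α).length := by
  obtain ⟨Δ, -, hchain⟩ := exists_mem_mwChain_eq_mwChainAux hα
  have := mwChainAux_getLastD_snd_add_length (Multiset.card α) α Δ (0, 0)
  simp only [mwSegment, segLen, hchain, mwChainAux_headD]
  omega

lemma card_mwShrink_le (p : ℤ × ℤ) : Multiset.card (mwShrink p) ≤ 1 := by
  unfold mwShrink; split <;> simp

lemma card_mwResidual_le (α : Multiset (ℤ × ℤ)) :
    Multiset.card (mwResidual α) ≤ Multiset.card α := by
  have hle := mwChain_le α
  have hshrink : Multiset.card ((mwChain α : Multiset (ℤ × ℤ)).bind mwShrink)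
      ≤ Multiset.card (mwChain α : Multiset (ℤ × ℤ)) := by
    rw [Multiset.card_bind]
    calc _ ≤ ((mwChain α : Multiset (ℤ × ℤ)).map fun _ => 1).sum :=
          Multiset.sum_map_le_sum_map _ _ fun p _ => card_mwShrink_le p
      _ = _ := by simp
  have := Multiset.card_le_card hle
  rw [mwResidual, Multiset.card_add, Multiset.card_sub hle]
  omega

lemma maxLen_tildeAux_le_card (n : ℕ) (α : Multiset (ℤ × ℤ)) :
    maxLen (tildeAux n α) ≤ Multiset.card α := by
  induction n generalizing α with
  | zero => simp [tildeAux, maxLen]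
  | succ n ih =>
    rw [tildeAux]
    split_ifs with hα
    · simp [maxLen]
    rw [maxLen_cons]
    refine sup_le ?_ ((ih _).trans (card_mwResidual_le α))
    rw [segLen_mwSegment hα]
    simpa using Multiset.card_le_card (mwChain_le α)

lemma maxLen_tilde_le_card (α : Multiset (ℤ × ℤ)) : maxLen (tilde α) ≤ Multiset.card α :=
  maxLen_tildeAux_le_card _ α

theorem card_eq_of_msLE_of_tilde_msLE_general (α β : Multiset (ℤ × ℤ))
    (hL : maxLen (tilde α) = Multiset.card α)
    (h : msLE α β) (ht : msLE (tilde α) (tilde β)) :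
    Multiset.card α = Multiset.card β ∧
    Multiset.card β = maxLen (tilde α) ∧
    maxLen (tilde α) = maxLen (tilde β) := by
  have hcard : Multiset.card β ≤ Multiset.card α := h.card_le
  have hmaxLen : maxLen (tilde α) ≤ maxLen (tilde β) := ht.maxLen_le
  have hβ : maxLen (tilde β) ≤ Multiset.card β := maxLen_tilde_le_card β
  omega

/-- If `L_{α~} = n_α`, `α ≤ β` and `α~ ≤ β~`, then `n_α = n_β = L_{α~} = L_{β~}`. -/
theorem card_eq_of_msLE_of_tilde_msLE (α β : Multiset (ℤ × ℤ))
    (hα : IsMultisegment α) (hβ : IsMultisegment β)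
    (hL : maxLen (tilde α) = Multiset.card α)
    (h : msLE α β) (ht : msLE (tilde α) (tilde β)) :
    Multiset.card α = Multiset.card β ∧
    Multiset.card β = maxLen (tilde α) ∧
    maxLen (tilde α) = maxLen (tilde β) :=
  card_eq_of_msLE_of_tilde_msLE_general α β hL h ht
end
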